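/- arXiv:1504.00997 — 2 statements merged into one kernel-verified Lean document; each statement's English description precedes it below -/
import Mathlib

section
/- Let n ≥ 4, 2 ≤ j ≤ n−2, and let W be a j-element subset of {1,...,n} with 1 ∉ W. Suppose a is an element of m(W) = {min(X) : X a connected component of C_n[W]} with a ≠ min(m(W)). Then the filling T of the Young diagram of shape (j, 2, 1^{n−j−2}) obtained by placing the elements of the complement of W in increasing order in the first column, placing a in position (2,2), and placing the elements of W \ {a} in increasing order in the remaining boxes of the first row, is a standard Young tableau. -/
open scoped Classical

noncomputable section

/-- The cycle graph `C_n` on vertex set `{1,...,n}` (as a graph on `ℕ`):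
`i ~ j` iff both lie in `{1,...,n}` and `i - j ≡ ±1 (mod n)`. -/
def cycleGraph (n : ℕ) : SimpleGraph ℕ where
  Adj i j := i ∈ Set.Icc 1 n ∧ j ∈ Set.Icc 1 n ∧ i ≠ j ∧
    ((i + 1) % n = j % n ∨ (j + 1) % n = i % n)
  symm := ⟨fun i j h => ⟨h.2.1, h.1, h.2.2.1.symm, h.2.2.2.symm⟩⟩
  loopless := ⟨fun i h => h.2.2.1 rfl⟩

/-- Number of connected components of the induced subgraph `C_n[W]`. -/
def numComponents (n : ℕ) (W : Set ℕ) : ℕ :=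
  Nat.card ((cycleGraph n).induce W).ConnectedComponent

/-- The set of minima of the connected components of `C_n[W]`. -/
def compMins (n : ℕ) (W : Set ℕ) : Set ℕ :=
  {a | ∃ ha : a ∈ W, ∀ b, ∀ hb : b ∈ W,
    ((cycleGraph n).induce W).Reachable ⟨a, ha⟩ ⟨b, hb⟩ → a ≤ b}

/-- `m(W)`: component minima of `C_n[complement of W]` if `1 ∈ W`,
of `C_n[W]` otherwise. -/
def mSet (n : ℕ) (W : Set ℕ) : Set ℕ :=
  if 1 ∈ W then compMins n (Set.Icc 1 n \ W) else compMins n W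

/-- The cells of the Young diagram of shape `(j, 2, 1^{n-j-2})`, 0-indexed:
row `0` has `j` boxes, row `1` has `2` boxes, rows `2,...,n-j-1` have one box. -/
def cell (n j : ℕ) (p : ℕ × ℕ) : Prop :=
  (p.1 = 0 ∧ p.2 < j) ∨ (p.1 = 1 ∧ p.2 < 2) ∨ (2 ≤ p.1 ∧ p.1 < n - j ∧ p.2 = 0)

/-- `T` is a standard Young tableau of shape `(j, 2, 1^{n-j-2})`:
zero outside the diagram, a bijection from the cells onto `{1,...,n}`,
strictly increasing along rows and columns. -/
def IsSYT (n j : ℕ) (T : ℕ × ℕ → ℕ) : Prop :=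
  (∀ p, ¬ cell n j p → T p = 0) ∧
  Set.BijOn T {p | cell n j p} (Set.Icc 1 n) ∧
  (∀ p q : ℕ × ℕ, cell n j p → cell n j q → p.1 = q.1 → p.2 < q.2 → T p < T q) ∧
  (∀ p q : ℕ × ℕ, cell n j p → cell n j q → p.2 = q.2 → p.1 < q.1 → T p < T q)

/-- `a_T = T(2,2)` (0-indexed: the entry at position `(1,1)`). -/
def aT (T : ℕ × ℕ → ℕ) : ℕ := T (1, 1)

/-- `W_T`: the set of first-row entries of `T` if `a_T - 1` lies in the first row,
and `{T(2,2)} ∪ {T(1,i) : 2 ≤ i ≤ j}` if `a_T - 1` lies in the first column. -/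
def WT (j : ℕ) (T : ℕ × ℕ → ℕ) : Set ℕ :=
  if ∃ c < j, T (0, c) = T (1, 1) - 1 then T '' {p : ℕ × ℕ | p.1 = 0 ∧ p.2 < j}
  else {T (1, 1)} ∪ T '' {p : ℕ × ℕ | p.1 = 0 ∧ 1 ≤ p.2 ∧ p.2 < j}

/-- The filling with the elements of `W` in increasing order in the first row,
`a` at position `(2,2)`, and the elements of `({1,...,n} \ W) \ {a}` in increasing
order in the remaining boxes of the first column. -/
def fillRow (n j : ℕ) (W : Set ℕ) (a : ℕ) : ℕ × ℕ → ℕ := fun p =>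
  if p.1 = 0 ∧ p.2 < j then Nat.nth (· ∈ W) p.2
  else if p = (1, 1) then a
  else if p.2 = 0 ∧ 1 ≤ p.1 ∧ p.1 < n - j then
    Nat.nth (· ∈ (Set.Icc 1 n \ W) \ {a}) (p.1 - 1)
  else 0

/-- The filling with the elements of `{1,...,n} \ W` in increasing order in the
first column, `a` at position `(2,2)`, and the elements of `W \ {a}` in increasing
order in the remaining boxes of the first row. -/
def fillCol (n j : ℕ) (W : Set ℕ) (a : ℕ) : ℕ × ℕ → ℕ := fun p =>
  if p.2 = 0 ∧ p.1 < n - j then Nat.nth (· ∈ Set.Icc 1 n \ W) p.1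
  else if p = (1, 1) then a
  else if p.1 = 0 ∧ 1 ≤ p.2 ∧ p.2 < j then Nat.nth (· ∈ W \ {a}) (p.2 - 1)
  else 0

/-- `S(j,n)`: pairs `(W, a)` with `W` a `j`-subset of `{1,...,n}` and `a` a
non-minimal element of `m(W)`. -/
def SpairSet (n j : ℕ) : Set (Set ℕ × ℕ) :=
  {p | p.1 ⊆ Set.Icc 1 n ∧ p.1.ncard = j ∧ p.2 ∈ mSet n p.1 ∧ p.2 ≠ sInf (mSet n p.1)}

end

/-! Let `C = {1,…,n} \ W` and `R = W \ {a}`. The filling is increasing down the first column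
and along the first row after its corner, so it is standard as soon as three corner
inequalities hold: `min C < min R`, `C₂ < a` for the second smallest element `C₂` of `C`, and
`min R < a`. As `1 ∉ W`, `min C = 1` while all of `W` is at least `2`. As `a` is the minimum of
its component but not `min W`, its neighbour `a - 1` lies outside `W` and `min W < a`;
so `1 < a - 1` are two elements of `C` below `a`, and `min W ∈ R` is below `a`. -/

open Set

theorem Set.BijOn.union_of_disjoint {α β : Type*} {f : α → β} {s₁ s₂ : Set α} {t₁ t₂ : Set β}
    (h₁ : BijOn f s₁ t₁) (h₂ : BijOn f s₂ t₂) (ht : Disjoint t₁ t₂) :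
    BijOn f (s₁ ∪ s₂) (t₁ ∪ t₂) := by
  refine h₁.union h₂ ?_
  rintro x (hx | hx) y (hy | hy) hxy
  · exact h₁.injOn hx hy hxy
  · exact (disjoint_left.1 ht (h₁.mapsTo hx) (hxy ▸ h₂.mapsTo hy)).elim
  · exact (disjoint_left.1 ht (h₁.mapsTo hy) (hxy ▸ h₂.mapsTo hx)).elim
  · exact h₂.injOn hx hy hxy

namespace Set.Finite

variable {S : Set ℕ}

theorem card_toFinset_ofPred_mem (hS : S.Finite) :
    (hS : (Set.ofPred (· ∈ S)).Finite).toFinset.card = S.ncard :=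
  (ncard_eq_toFinset_card S hS).symm

theorem bijOn_nth (hS : S.Finite) : BijOn (Nat.nth (· ∈ S)) (Iio S.ncard) S := by
  have h := (Nat.nth_injOn (p := (· ∈ S)) hS).bijOn_image
  rwa [Nat.image_nth_Iio_card, hS.card_toFinset_ofPred_mem] at h

theorem nth_lt_nth (hS : S.Finite) {m k : ℕ} (h : m < k) (hk : k < S.ncard) :
    Nat.nth (· ∈ S) m < Nat.nth (· ∈ S) k :=
  Nat.nth_lt_nth_of_lt_card hS h (hS.card_toFinset_ofPred_mem ▸ hk)

theorem nth_le_nth (hS : S.Finite) {m k : ℕ} (h : m ≤ k) (hk : k < S.ncard) :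
    Nat.nth (· ∈ S) m ≤ Nat.nth (· ∈ S) k :=
  Nat.nth_le_nth_of_lt_card hS h (hS.card_toFinset_ofPred_mem ▸ hk)

end Set.Finite

theorem Nat.nth_zero_le {p : ℕ → Prop} {x : ℕ} (hx : p x) : nth p 0 ≤ x := by
  rw [nth_zero]
  exact Nat.sInf_le hx

theorem Nat.nth_one_le_of_lt {p : ℕ → Prop} {x y : ℕ} (hx : p x) (hy : p y) (hxy : x < y) :
    nth p 1 ≤ y := by
  rw [nth_eq_sInf]
  refine Nat.sInf_le ⟨hy, fun k hk => ?_⟩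
  obtain rfl : k = 0 := by omega
  exact (nth_zero_le hx).trans_lt hxy

theorem Nat.le_nth_zero {p : ℕ → Prop} {b : ℕ} (hp : ∃ x, p x) (hb : ∀ x, p x → b ≤ x) :
    b ≤ nth p 0 := by
  rw [nth_zero]
  exact le_csInf hp hb

section Tableau

variable {n j : ℕ} {W : Set ℕ} {a : ℕ}

theorem cell_iff (hj : 0 < j) (hnj : 2 ≤ n - j) {r c : ℕ} :
    cell n j (r, c) ↔ (c = 0 ∧ r < n - j) ∨ (r = 1 ∧ c = 1) ∨ (r = 0 ∧ 1 ≤ c ∧ c < j) := by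
  unfold cell
  omega

theorem setOf_cell_eq (hj : 0 < j) (hnj : 2 ≤ n - j) :
    {p | cell n j p} = (fun r => (r, 0)) '' Iio (n - j) ∪
      ({(1, 1)} ∪ (fun c => (0, c + 1)) '' Iio (j - 1)) := by
  ext ⟨r, c⟩
  simp only [mem_ofPred_eq, cell_iff hj hnj, mem_union, mem_image, mem_Iio, mem_singleton_iff,
    Prod.mk.injEq]
  constructor
  · rintro (⟨rfl, hr⟩ | ⟨rfl, rfl⟩ | ⟨rfl, hc, hcj⟩)
    · exact Or.inl ⟨r, hr, rfl, rfl⟩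
    · exact Or.inr (Or.inl ⟨rfl, rfl⟩)
    · exact Or.inr (Or.inr ⟨c - 1, by omega, rfl, by omega⟩)
  · rintro (⟨r, hr, rfl, rfl⟩ | ⟨rfl, rfl⟩ | ⟨c, hc, rfl, rfl⟩) <;> omega

theorem fillCol_apply_col {r : ℕ} (hr : r < n - j) :
    fillCol n j W a (r, 0) = Nat.nth (· ∈ Icc 1 n \ W) r := by
  simp [fillCol, hr]

theorem fillCol_apply_one_one : fillCol n j W a (1, 1) = a := by
  simp [fillCol]

theorem fillCol_apply_row {c : ℕ} (hc : c + 1 < j) :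
    fillCol n j W a (0, c + 1) = Nat.nth (· ∈ W \ {a}) c := by
  simp [fillCol, hc]

theorem fillCol_eq_zero_of_not_cell (hj : 0 < j) {p : ℕ × ℕ} (hp : ¬ cell n j p) :
    fillCol n j W a p = 0 := by
  obtain ⟨r, c⟩ := p
  unfold fillCol cell at *
  split_ifs <;> simp_all
  omega

theorem ncard_Icc_sdiff (hW : W ⊆ Icc 1 n) (hcard : W.ncard = j) :
    (Icc 1 n \ W).ncard = n - j := by
  rw [ncard_sdiff hW ((finite_Icc 1 n).subset hW), ncard_Icc_nat, hcard, Nat.add_sub_cancel]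

theorem fillCol_bijOn (hj : 0 < j) (hnj : 2 ≤ n - j) (hW : W ⊆ Icc 1 n) (hcard : W.ncard = j)
    (ha : a ∈ W) : BijOn (fillCol n j W a) {p | cell n j p} (Icc 1 n) := by
  have hcol : BijOn (fillCol n j W a) ((fun r => (r, 0)) '' Iio (n - j)) (Icc 1 n \ W) := by
    rw [← bijOn_comp_iff fun _ _ _ _ h => congrArg Prod.fst h, ← ncard_Icc_sdiff hW hcard]
    exact (finite_Icc 1 n).sdiff.bijOn_nth.congr fun r hr =>
      (fillCol_apply_col (hr.trans_eq (ncard_Icc_sdiff hW hcard))).symm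
  have hrow : BijOn (fillCol n j W a) ((fun c => (0, c + 1)) '' Iio (j - 1)) (W \ {a}) := by
    have hR : (W \ {a}).ncard = j - 1 := by rw [ncard_sdiff_singleton_of_mem ha, hcard]
    rw [← bijOn_comp_iff fun _ _ _ _ h => by simpa using h, ← hR]
    exact ((finite_Icc 1 n).subset hW).sdiff.bijOn_nth.congr fun c hc =>
      (fillCol_apply_row (Nat.add_lt_of_lt_sub (hc.trans_eq hR))).symm
  have hrange : Icc 1 n = (Icc 1 n \ W) ∪ ({a} ∪ W \ {a}) := by
    rw [singleton_union, insert_sdiff_singleton, insert_eq_of_mem ha, sdiff_union_of_subset hW]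
  rw [setOf_cell_eq hj hnj, hrange]
  refine hcol.union_of_disjoint ?_ ?_
  · exact (bijOn_singleton.2 fillCol_apply_one_one).union_of_disjoint hrow
      (disjoint_singleton_left.2 fun h => h.2 rfl)
  · exact disjoint_sdiff_left.mono_right (union_subset (singleton_subset_iff.2 ha) sdiff_subset)

theorem fillCol_lt_of_fst_eq (hj : 0 < j) (hnj : 2 ≤ n - j) (hW : W ⊆ Icc 1 n)
    (hcard : W.ncard = j) (ha : a ∈ W)
    (hC₀ : Nat.nth (· ∈ Icc 1 n \ W) 0 < Nat.nth (· ∈ W \ {a}) 0)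
    (hC₁ : Nat.nth (· ∈ Icc 1 n \ W) 1 < a) {p q : ℕ × ℕ} (hp : cell n j p) (hq : cell n j q)
    (hrow : p.1 = q.1) (hlt : p.2 < q.2) : fillCol n j W a p < fillCol n j W a q := by
  obtain ⟨r, c⟩ := p
  obtain ⟨r', c'⟩ := q
  dsimp only at hrow hlt
  subst hrow
  have hR : (W \ {a}).ncard = j - 1 := by rw [ncard_sdiff_singleton_of_mem ha, hcard]
  have hRfin : (W \ {a}).Finite := ((finite_Icc 1 n).subset hW).sdiff
  rw [cell_iff hj hnj] at hp hq
  rcases hp with ⟨rfl, hr⟩ | ⟨rfl, rfl⟩ | ⟨rfl, hc, hcj⟩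
  · rcases hq with ⟨h, -⟩ | ⟨rfl, rfl⟩ | ⟨rfl, -, hcj'⟩
    · omega
    · rw [fillCol_apply_col hr, fillCol_apply_one_one]
      exact hC₁
    · obtain ⟨k', rfl⟩ : ∃ k', c' = k' + 1 := ⟨c' - 1, by omega⟩
      rw [fillCol_apply_col hr, fillCol_apply_row hcj']
      exact hC₀.trans_le (hRfin.nth_le_nth k'.zero_le (by omega))
  · omega
  · obtain ⟨k, rfl⟩ : ∃ k, c = k + 1 := ⟨c - 1, by omega⟩
    obtain ⟨k', rfl⟩ : ∃ k', c' = k' + 1 := ⟨c' - 1, by omega⟩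
    have hcj' : k' + 1 < j := by omega
    rw [fillCol_apply_row hcj, fillCol_apply_row hcj']
    exact hRfin.nth_lt_nth (by omega) (by omega)

theorem fillCol_lt_of_snd_eq (hj : 0 < j) (hnj : 2 ≤ n - j) (hW : W ⊆ Icc 1 n)
    (hcard : W.ncard = j) (hR₀ : Nat.nth (· ∈ W \ {a}) 0 < a) {p q : ℕ × ℕ}
    (hp : cell n j p) (hq : cell n j q) (hcol : p.2 = q.2) (hlt : p.1 < q.1) :
    fillCol n j W a p < fillCol n j W a q := by
  obtain ⟨r, c⟩ := p
  obtain ⟨r', c'⟩ := q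
  dsimp only at hcol hlt
  subst hcol
  rw [cell_iff hj hnj] at hp hq
  rcases hp with ⟨rfl, hr⟩ | ⟨rfl, rfl⟩ | ⟨rfl, hc, hcj⟩
  · obtain ⟨-, hr'⟩ : 0 = 0 ∧ r' < n - j := by omega
    rw [fillCol_apply_col hr, fillCol_apply_col hr']
    exact (finite_Icc 1 n).sdiff.nth_lt_nth hlt (hr'.trans_eq (ncard_Icc_sdiff hW hcard).symm)
  · omega
  · obtain ⟨rfl, rfl⟩ : r' = 1 ∧ c = 1 := by omega
    rw [fillCol_apply_row (c := 0) hcj, fillCol_apply_one_one]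
    exact hR₀

theorem isSYT_fillCol (hj : 0 < j) (hnj : 2 ≤ n - j) (hW : W ⊆ Icc 1 n) (hcard : W.ncard = j)
    (ha : a ∈ W) (hC₀ : Nat.nth (· ∈ Icc 1 n \ W) 0 < Nat.nth (· ∈ W \ {a}) 0)
    (hC₁ : Nat.nth (· ∈ Icc 1 n \ W) 1 < a) (hR₀ : Nat.nth (· ∈ W \ {a}) 0 < a) :
    IsSYT n j (fillCol n j W a) :=
  ⟨fun _ => fillCol_eq_zero_of_not_cell hj, fillCol_bijOn hj hnj hW hcard ha,
    fun _ _ => fillCol_lt_of_fst_eq hj hnj hW hcard ha hC₀ hC₁,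
    fun _ _ => fillCol_lt_of_snd_eq hj hnj hW hcard hR₀⟩

end Tableau

theorem cycleGraph_adj_sub_one {n a : ℕ} (ha : 2 ≤ a) (han : a ≤ n) :
    (cycleGraph n).Adj a (a - 1) :=
  ⟨⟨by omega, han⟩, ⟨by omega, by omega⟩, by omega, Or.inr (by rw [Nat.sub_add_cancel (by omega)])⟩

theorem sub_one_notMem_of_mem_compMins {n a : ℕ} {W : Set ℕ} (hW : W ⊆ Icc 1 n)
    (ha : a ∈ compMins n W) (ha₂ : 2 ≤ a) : a - 1 ∉ W := by
  obtain ⟨haW, hmin⟩ := ha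
  intro h
  have hadj : ((cycleGraph n).induce W).Adj ⟨a, haW⟩ ⟨a - 1, h⟩ :=
    cycleGraph_adj_sub_one ha₂ (hW haW).2
  have := hmin _ h hadj.reachable
  omega

theorem compMins_subset {n : ℕ} {W : Set ℕ} : compMins n W ⊆ W :=
  fun _ ⟨ha, _⟩ => ha

theorem sInf_mem_compMins {n : ℕ} {W : Set ℕ} (hW : W.Nonempty) : sInf W ∈ compMins n W :=
  ⟨Nat.sInf_mem hW, fun _ hb _ => Nat.sInf_le hb⟩

theorem sInf_compMins {n : ℕ} {W : Set ℕ} (hW : W.Nonempty) : sInf (compMins n W) = sInf W :=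
  le_antisymm (Nat.sInf_le (sInf_mem_compMins hW))
    (csInf_le_csInf (OrderBot.bddBelow W) ⟨_, sInf_mem_compMins hW⟩ compMins_subset)

theorem stmt_3_general (n j : ℕ) (hj1 : 2 ≤ j) (hj2 : j ≤ n - 2)
    (W : Set ℕ) (hW : W ⊆ Set.Icc 1 n) (hcard : W.ncard = j) (h1 : 1 ∉ W)
    (a : ℕ) (ha : a ∈ compMins n W) (hmin : a ≠ sInf (compMins n W)) :
    IsSYT n j (fillCol n j W a) := by
  have haW : a ∈ W := compMins_subset ha
  have hW₂ : ∀ x ∈ W, 2 ≤ x := fun x hx => by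
    have := (hW hx).1
    have : x ≠ 1 := fun h => h1 (h ▸ hx)
    omega
  rw [sInf_compMins ⟨a, haW⟩] at hmin
  have hlt : sInf W < a := (Nat.sInf_le haW).lt_of_ne hmin.symm
  have hminR : sInf W ∈ W \ {a} := ⟨Nat.sInf_mem ⟨a, haW⟩, hlt.ne⟩
  have ha₃ : 3 ≤ a := (hW₂ _ hminR.1).trans_lt hlt
  have h1C : 1 ∈ Icc 1 n \ W := ⟨⟨le_rfl, by omega⟩, h1⟩
  have hpredC : a - 1 ∈ Icc 1 n \ W :=
    ⟨⟨by omega, (Nat.sub_le a 1).trans (hW haW).2⟩, sub_one_notMem_of_mem_compMins hW ha (by omega)⟩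
  refine isSYT_fillCol (by omega) (by omega) hW hcard haW ?_ ?_ ?_
  · calc Nat.nth (· ∈ Icc 1 n \ W) 0 ≤ 1 := Nat.nth_zero_le h1C
      _ < 2 := one_lt_two
      _ ≤ Nat.nth (· ∈ W \ {a}) 0 := Nat.le_nth_zero ⟨_, hminR⟩ fun x hx => hW₂ x hx.1
  · exact (Nat.nth_one_le_of_lt h1C hpredC (by omega)).trans_lt (by omega)
  · exact (Nat.nth_zero_le hminR).trans_lt hlt

/-- when `1 ∉ W` and `a` is a non-minimal component minimum of
`C_n[W]`, the filling `fillCol` is a standard Young tableau. -/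
theorem stmt_3 (n j : ℕ) (hn : 4 ≤ n) (hj1 : 2 ≤ j) (hj2 : j ≤ n - 2)
    (W : Set ℕ) (hW : W ⊆ Set.Icc 1 n) (hcard : W.ncard = j) (h1 : 1 ∉ W)
    (a : ℕ) (ha : a ∈ compMins n W) (hmin : a ≠ sInf (compMins n W)) :
    IsSYT n j (fillCol n j W a) :=
  stmt_3_general n j hj1 hj2 W hW hcard h1 a ha hmin
end

section
/- For n ≥ 4 and 2 ≤ j ≤ n−2, the map φ sending a standard Young tableau T of shape (j, 2, 1^{n−j−2}) to the pair (W_T, a_T) — where a_T = T(2,2) and W_T is the set of first-row entries of T if a_T − 1 lies in the first row, and is {T(2,2)} ∪ {T(1,i) : 2 ≤ i ≤ j} if a_T − 1 lies in the first column — is injective. -/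
open scoped Classical

/-! A standard tableau `T` of shape `(j, 2, 1^{n-j-2})` is determined by `a_T` and the set `R`
of its first-row entries: the first row lists `R` increasingly, and the first column below it
lists `{1, …, n} \ (R ∪ {a_T})` increasingly. Since `a_T ∉ R`, the pair `(W_T, a_T)` tells which
case of the definition of `W_T` occurred (`a_T ∈ W_T` exactly in the second one), and there
`R = {1} ∪ (W_T \ {a_T})` because `T(1,1) = 1`. -/

open Set

theorem StrictMonoOn.eqOn_of_image_eq {α β : Type*} [LinearOrder α] [WellFoundedLT α] [Preorder β]
    {s : Set α} {f g : α → β} (hf : StrictMonoOn f s) (hg : StrictMonoOn g s)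
    (h : f '' s = g '' s) : s.EqOn f g := by
  rw [← Set.domRestrict_eq_domRestrict_iff, ← hf.domRestrict.range_inj hg.domRestrict,
    Set.range_domRestrict, Set.range_domRestrict, h]

lemma cell_row {n j c : ℕ} (hc : c < j) : cell n j (0, c) := Or.inl ⟨rfl, hc⟩

lemma cell_one_one {n j : ℕ} : cell n j (1, 1) := Or.inr (Or.inl ⟨rfl, one_lt_two⟩)

lemma cell_col {n j i : ℕ} (hi : i ∈ Ico 1 (n - j)) : cell n j (i, 0) := by
  simp only [mem_Ico] at hi
  unfold cell
  omega

lemma setOf_cell_sdiff {n j : ℕ} (hjn : j + 2 ≤ n) :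
    {p | cell n j p} \ ({p : ℕ × ℕ | p.1 = 0 ∧ p.2 < j} ∪ {(1, 1)}) =
      (fun i => (i, 0)) '' Ico 1 (n - j) := by
  ext ⟨a, b⟩
  simp only [cell, mem_sdiff, mem_union, mem_ofPred_eq, mem_singleton_iff, Prod.mk.injEq,
    mem_image, mem_Ico, ↓existsAndEq, true_and]
  omega

lemma image_row_eq_image_Iio (T : ℕ × ℕ → ℕ) (j : ℕ) :
    T '' {p : ℕ × ℕ | p.1 = 0 ∧ p.2 < j} = (fun c => T (0, c)) '' Iio j := by
  ext x
  simp

namespace IsSYT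

variable {n j : ℕ} {T T' : ℕ × ℕ → ℕ}

lemma strictMonoOn_row (hT : IsSYT n j T) : StrictMonoOn (fun c => T (0, c)) (Iio j) :=
  fun _ hc _ hc' h => hT.2.2.1 _ _ (cell_row hc) (cell_row hc') rfl h

lemma strictMonoOn_col (hT : IsSYT n j T) : StrictMonoOn (fun i => T (i, 0)) (Ico 1 (n - j)) :=
  fun _ hi _ hi' h => hT.2.2.2 _ _ (cell_col hi) (cell_col hi') rfl h

lemma apply_one_one_notMem_image_row (hT : IsSYT n j T) :
    T (1, 1) ∉ T '' {p : ℕ × ℕ | p.1 = 0 ∧ p.2 < j} := by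
  rintro ⟨p, hp, hpT⟩
  have := hT.2.1.injOn (Or.inl hp) cell_one_one hpT
  simp [this] at hp

lemma image_col (hT : IsSYT n j T) (hjn : j + 2 ≤ n) :
    (fun i => T (i, 0)) '' Ico 1 (n - j) =
      Icc 1 n \ insert (T (1, 1)) (T '' {p : ℕ × ℕ | p.1 = 0 ∧ p.2 < j}) := by
  have hsub : {p : ℕ × ℕ | p.1 = 0 ∧ p.2 < j} ∪ {(1, 1)} ⊆ {p | cell n j p} :=
    union_subset (fun _ hp => Or.inl hp) (singleton_subset_iff.2 cell_one_one)
  rw [← image_image T, ← setOf_cell_sdiff hjn, hT.2.1.injOn.image_sdiff_subset hsub,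
    hT.2.1.image_eq, image_union, image_singleton, union_singleton]

lemma apply_zero_zero_le (hT : IsSYT n j T) (hj : 0 < j) {p : ℕ × ℕ} (hp : cell n j p) :
    T (0, 0) ≤ T p := by
  obtain ⟨a, b⟩ := p
  have hc10 : cell n j (1, 0) := Or.inr (Or.inl ⟨rfl, two_pos⟩)
  have h10 : T (0, 0) < T (1, 0) := hT.2.2.2 _ _ (cell_row hj) hc10 rfl one_pos
  rcases hp with ⟨rfl, hb⟩ | ⟨rfl, hb⟩ | ⟨ha, ha', rfl⟩
  · rcases b.eq_zero_or_pos with rfl | hb0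
    · rfl
    · exact (hT.2.2.1 _ _ (cell_row hj) (cell_row hb) rfl hb0).le
  · interval_cases b
    · exact h10.le
    · exact (h10.trans (hT.2.2.1 _ _ hc10 cell_one_one rfl one_pos)).le
  · exact (hT.2.2.2 _ _ (cell_row hj) (Or.inr (Or.inr ⟨ha, ha', rfl⟩)) rfl (by simp; omega)).le

lemma apply_zero_zero (hT : IsSYT n j T) (hj : 0 < j) : T (0, 0) = 1 := by
  have h11 := hT.2.1.mapsTo (cell_one_one (n := n) (j := j))
  obtain ⟨p, hp, hp1⟩ := hT.2.1.surjOn (⟨le_rfl, h11.1.trans h11.2⟩ : 1 ∈ Icc 1 n)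
  exact le_antisymm (hp1 ▸ hT.apply_zero_zero_le hj hp) (hT.2.1.mapsTo (cell_row hj)).1

lemma image_row_eq_of_WT (hT : IsSYT n j T) (hj : 0 < j) :
    T '' {p : ℕ × ℕ | p.1 = 0 ∧ p.2 < j} =
      if T (1, 1) ∈ WT j T then insert 1 (WT j T \ {T (1, 1)}) else WT j T := by
  by_cases h : ∃ c < j, T (0, c) = T (1, 1) - 1
  · rw [WT, if_pos h, if_neg hT.apply_one_one_notMem_image_row]
  · have hrow : {p : ℕ × ℕ | p.1 = 0 ∧ p.2 < j} =
        insert (0, 0) {p : ℕ × ℕ | p.1 = 0 ∧ 1 ≤ p.2 ∧ p.2 < j} := by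
      ext ⟨a, b⟩
      simp only [mem_ofPred_eq, mem_insert_iff, Prod.mk.injEq]
      omega
    have hnotMem : T (1, 1) ∉ T '' {p : ℕ × ℕ | p.1 = 0 ∧ 1 ≤ p.2 ∧ p.2 < j} :=
      fun h' => hT.apply_one_one_notMem_image_row (hrow ▸ image_mono (subset_insert _ _) h')
    rw [WT, if_neg h, if_pos (mem_union_left _ (mem_singleton _)), singleton_union,
      insert_sdiff_self_of_notMem hnotMem, hrow, image_insert_eq, hT.apply_zero_zero hj]

lemma eq_of_image_row_eq (hT : IsSYT n j T) (hT' : IsSYT n j T') (hjn : j + 2 ≤ n)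
    (hrow : T '' {p : ℕ × ℕ | p.1 = 0 ∧ p.2 < j} = T' '' {p : ℕ × ℕ | p.1 = 0 ∧ p.2 < j})
    (h11 : T (1, 1) = T' (1, 1)) : T = T' := by
  have hrowEq := hT.strictMonoOn_row.eqOn_of_image_eq hT'.strictMonoOn_row
    (by rwa [image_row_eq_image_Iio, image_row_eq_image_Iio] at hrow)
  have hcolEq := hT.strictMonoOn_col.eqOn_of_image_eq hT'.strictMonoOn_col
    (by rw [hT.image_col hjn, hT'.image_col hjn, hrow, h11])
  funext ⟨a, b⟩
  by_cases hp : cell n j (a, b)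
  · rcases hp with ⟨rfl, hb⟩ | ⟨rfl, hb⟩ | ⟨ha, ha', rfl⟩
    · exact hrowEq hb
    · interval_cases b
      · exact hcolEq (by simp; omega)
      · exact h11
    · exact hcolEq (by simp; omega)
  · rw [hT.1 _ hp, hT'.1 _ hp]

end IsSYT

theorem stmt_19_general (n j : ℕ) (hj1 : 2 ≤ j) (hj2 : j ≤ n - 2) :
    Set.InjOn (fun T : ℕ × ℕ → ℕ => (WT j T, aT T)) {T | IsSYT n j T} := by
  rintro T (hT : IsSYT n j T) T' (hT' : IsSYT n j T') h
  obtain ⟨hW, h11⟩ : WT j T = WT j T' ∧ T (1, 1) = T' (1, 1) := Prod.mk.inj h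
  refine hT.eq_of_image_row_eq hT' (by omega) ?_ h11
  rw [hT.image_row_eq_of_WT (by omega), hT'.image_row_eq_of_WT (by omega), hW, h11]

/-- the map `φ : T ↦ (W_T, a_T)` is injective on SYT of shape
`(j,2,1^{n-j-2})`. -/
theorem stmt_19 (n j : ℕ) (hn : 4 ≤ n) (hj1 : 2 ≤ j) (hj2 : j ≤ n - 2) :
    Set.InjOn (fun T : ℕ × ℕ → ℕ => (WT j T, aT T)) {T | IsSYT n j T} :=
  stmt_19_general n j hj1 hj2
end
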